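/- Suppose R_0 and R are monoidal categories, the functor c : R_0 → R is strong monoidal, and D_R is given the induced monoidal product (the product of arrows x → y and x' → y' followed by free isomorphisms w and w' is the arrow x ⊗ x' → y ⊗ y' in R_0 followed by the automorphism w ⊗ w'). Then the left Kan extension functor p_! : Set^{D_R^op} → Set^{R^op} along the monoidal projection p : D_R → R is canonically a strong monoidal functor with respect to the Day convolution monoidal structures on both presheaf categories. -/

import Mathlib

open CategoryTheory Limits Opposite MonoidalCategory

universe u

namespace PaperFormal

variable {C : Type u} [Category.{u} C]

/-- A tribe (Joyal): a category with a terminal object and a class of fibrations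
containing the isomorphisms and the maps to the terminal object, closed under
composition, with pullbacks of fibrations existing and being fibrations;
every map factors as an anodyne map (LLP against all fibrations) followed by a
fibration, and anodyne maps are stable under pullback along fibrations. -/
structure Tribe (C : Type u) [Category.{u} C] : Type u where
  fib : MorphismProperty C
  term : C
  isTerminal : IsTerminal term
  fib_of_iso : ∀ {a b : C} (f : a ⟶ b), IsIso f → fib f
  fib_comp : ∀ {a b c : C} (f : a ⟶ b) (g : b ⟶ c), fib f → fib g → fib (f ≫ g)
  fib_to_term : ∀ a : C, fib (isTerminal.from a)
  hasPullback : ∀ {a b c : C} (f : a ⟶ c) (p : b ⟶ c), fib p → HasPullback f p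
  fib_base_change :
    ∀ {P x y z : C} (fst : P ⟶ x) (snd : P ⟶ y) (f : x ⟶ z) (g : y ⟶ z),
      IsPullback fst snd f g → fib g → fib fst
  factor :
    ∀ {a b : C} (f : a ⟶ b), ∃ (e : C) (i : a ⟶ e) (q : e ⟶ b),
      i ≫ q = f ∧ fib q ∧
        (∀ {x y : C} (p : x ⟶ y), fib p → HasLiftingProperty i p)
  anodyne_base_change :
    ∀ {P x y z : C} (fst : P ⟶ x) (snd : P ⟶ y) (f : x ⟶ z) (g : y ⟶ z),
      IsPullback fst snd f g → fib g →
      (∀ {u v : C} (q : u ⟶ v), fib q → HasLiftingProperty f q) →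
      (∀ {u v : C} (q : u ⟶ v), fib q → HasLiftingProperty fst q)

/-- Anodyne maps of a tribe: the maps with the left lifting property against
all fibrations. -/
def Tribe.anodyne (T : Tribe C) : MorphismProperty C :=
  fun _ _ f => ∀ {x y : C} (p : x ⟶ y), T.fib p → HasLiftingProperty f p

/-- `σ : b ⟶ P` together with `π₁ π₂ : P ⟶ b` is a path object for `b`:
`σ` is an anodyne section of both projections and the induced map to the
product `b × b` is a fibration. -/
def Tribe.IsPathObject (T : Tribe C) {b P : C} (σ : b ⟶ P) (π₁ π₂ : P ⟶ b) : Prop :=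
  σ ≫ π₁ = 𝟙 b ∧ σ ≫ π₂ = 𝟙 b ∧ T.anodyne σ ∧
    ∃ (bb : C) (p q : bb ⟶ b),
      IsPullback p q (T.isTerminal.from b) (T.isTerminal.from b) ∧
      ∃ k : P ⟶ bb, k ≫ p = π₁ ∧ k ≫ q = π₂ ∧ T.fib k

/-- Two maps are homotopic if they factor jointly through a path object. -/
def Tribe.Homotopic (T : Tribe C) {a b : C} (f g : a ⟶ b) : Prop :=
  ∃ (P : C) (σ : b ⟶ P) (π₁ π₂ : P ⟶ b), T.IsPathObject σ π₁ π₂ ∧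
    ∃ H : a ⟶ P, H ≫ π₁ = f ∧ H ≫ π₂ = g

/-- Weak equivalences of a tribe are its homotopy equivalences. -/
def Tribe.weq (T : Tribe C) : MorphismProperty C :=
  fun a b f => ∃ g : b ⟶ a, T.Homotopic (f ≫ g) (𝟙 a) ∧ T.Homotopic (g ≫ f) (𝟙 b)

/-- Trivial fibrations: fibrations that are weak equivalences. -/
def Tribe.trivFib (T : Tribe C) : MorphismProperty C :=
  fun _ _ f => T.fib f ∧ T.weq f



/-- A (strict) direct category structure: a degree function such that morphisms
do not lower degree and any morphism between objects of equal degree is an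
identity. -/
def IsDirect {J : Type u} [Category.{u} J] (deg : J → ℕ) : Prop :=
  (∀ {i j : J} (_ : i ⟶ j), deg i ≤ deg j) ∧
    (∀ {i j : J} (f : i ⟶ j) (h : deg i = deg j), ∃ h' : i = j, f = eqToHom h')

/-- A generalized direct category structure (as for EZ-categories): morphisms do
not lower degree and morphisms between objects of equal degree are isomorphisms. -/
def IsGenDirect {J : Type u} [Category.{u} J] (deg : J → ℕ) : Prop :=
  (∀ {i j : J} (_ : i ⟶ j), deg i ≤ deg j) ∧
    (∀ {i j : J} (f : i ⟶ j), deg i = deg j → IsIso f)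

section Reedy

variable {J : Type u} [Category.{u} J]

/-- The index category for the matching object of a `J`-indexed diagram
(`J`-presheaf) at `x`: non-identity morphisms of `J` with target `x`. -/
structure MatchIdx (J : Type u) [Category.{u} J] (x : J) : Type u where
  src : J
  hom : src ⟶ x
  nonid : ∀ h : src = x, hom ≠ eqToHom h

instance (x : J) : Category.{u} (MatchIdx J x) where
  Hom a b := { u : b.src ⟶ a.src // u ≫ a.hom = b.hom }
  id a := ⟨𝟙 a.src, by simp⟩
  comp {a b c} u v := ⟨v.val ≫ u.val, by rw [Category.assoc, u.property, v.property]⟩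
  id_comp := by intros; apply Subtype.ext; simp
  comp_id := by intros; apply Subtype.ext; simp
  assoc := by intros; apply Subtype.ext; simp

/-- The diagram whose limit is the matching object at `x` of a diagram
`F : Jᵒᵖ ⥤ C`. -/
@[simps]
def matchingDiagram (F : Jᵒᵖ ⥤ C) (x : J) : MatchIdx J x ⥤ C where
  obj a := F.obj (op a.src)
  map {a b} u := F.map u.val.op
  map_id := by
    intro a
    show F.map (𝟙 a.src).op = _
    simp
  map_comp := by
    intro a b c u v
    show F.map (v.val ≫ u.val).op = _
    rw [op_comp, F.map_comp]

/-- The canonical cone on the matching diagram with vertex `F x`. -/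
@[simps]
def matchingCone (F : Jᵒᵖ ⥤ C) (x : J) : Cone (matchingDiagram F x) where
  pt := F.obj (op x)
  π := { app := fun a => F.map a.hom.op
         naturality := by
           intro a b u
           dsimp [matchingDiagram]
           rw [Category.id_comp, ← F.map_comp, ← op_comp, u.property] }

/-- Given `p : F ⟶ F'`, transport a cone on the matching diagram of `F`
to a cone on the matching diagram of `F'`. -/
@[simps]
def matchingConeMap {F F' : Jᵒᵖ ⥤ C} (p : F ⟶ F') (x : J)
    (c : Cone (matchingDiagram F x)) : Cone (matchingDiagram F' x) where
  pt := c.pt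
  π := { app := fun a => c.π.app a ≫ p.app (op a.src)
         naturality := by
           intro a b u
           dsimp [matchingDiagram]
           rw [Category.id_comp, Category.assoc, ← p.naturality]
           have := c.π.naturality u
           dsimp [matchingDiagram] at this
           rw [Category.id_comp] at this
           rw [← Category.assoc, ← this] }

/-- `p : F ⟶ F'` is a Reedy map with relative matching maps in the class `P`:
for every `x` the matching objects of `F` and `F'` at `x` exist, the pullback
`F' x ×_{M_x F'} M_x F` exists, and the induced gap map belongs to `P`.
Taking `P` to be the fibrations (resp. trivial fibrations) of a tribe yields
Reedy fibrations (resp. Reedy trivial fibrations). -/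
def ReedyMapWrt (P : MorphismProperty C) {F F' : Jᵒᵖ ⥤ C} (p : F ⟶ F') : Prop :=
  ∀ x : J,
    ∃ (MF : LimitCone (matchingDiagram F x)) (MF' : LimitCone (matchingDiagram F' x))
      (Q : C) (q₁ : Q ⟶ F'.obj (op x)) (q₂ : Q ⟶ MF.cone.pt),
      IsPullback q₁ q₂ (MF'.isLimit.lift (matchingCone F' x))
          (MF'.isLimit.lift (matchingConeMap p x MF.cone)) ∧
      ∀ gap : F.obj (op x) ⟶ Q,
        gap ≫ q₁ = p.app (op x) →
        gap ≫ q₂ = MF.isLimit.lift (matchingCone F x) → P gap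

/-- Reedy fibrations between diagrams `Jᵒᵖ ⥤ C` relative to a tribe structure. -/
def ReedyFib (T : Tribe C) {F F' : Jᵒᵖ ⥤ C} (p : F ⟶ F') : Prop :=
  ReedyMapWrt T.fib p

/-- Reedy trivial fibrations between diagrams `Jᵒᵖ ⥤ C`. -/
def ReedyTrivFib (T : Tribe C) {F F' : Jᵒᵖ ⥤ C} (p : F ⟶ F') : Prop :=
  ReedyMapWrt T.trivFib p

/-- A diagram is Reedy fibrant if for every `x` the matching object at `x`
exists and the canonical map into it is a fibration. -/
def ReedyFibrant (T : Tribe C) (F : Jᵒᵖ ⥤ C) : Prop :=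
  ∀ x : J, ∃ MF : LimitCone (matchingDiagram F x),
    T.fib (MF.isLimit.lift (matchingCone F x))

/-- A diagram is homotopical (homotopically constant) if it sends every
morphism to a weak equivalence. -/
def Homotopical (T : Tribe C) (F : Jᵒᵖ ⥤ C) : Prop :=
  ∀ {i j : Jᵒᵖ} (f : i ⟶ j), T.weq (F.map f)

/-- A `J`-frame in a tribe: a Reedy fibrant homotopical diagram `Jᵒᵖ ⥤ C`. -/
def IsJFrame (T : Tribe C) (F : Jᵒᵖ ⥤ C) : Prop :=
  Homotopical T F ∧ ReedyFibrant T F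

/-- Anodyne maps of diagrams relative to the Reedy tribe structure:
maps with the left lifting property against all Reedy fibrations between
Reedy fibrant diagrams. -/
def ReedyAnodyne (T : Tribe C) {F F' : Jᵒᵖ ⥤ C} (i : F ⟶ F') : Prop :=
  ∀ {G G' : Jᵒᵖ ⥤ C} (q : G ⟶ G'), ReedyFibrant T G → ReedyFibrant T G' →
    ReedyFib T q → HasLiftingProperty i q

end Reedy




variable {J : Type u} [Category.{u} J]

/-- A presheaf is finite if it has finitely many cells. -/
def FinPsh (K : Jᵒᵖ ⥤ Type u) : Prop :=
  Finite (Σ j : Jᵒᵖ, K.obj j)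

/-- Data exhibiting `pt` as a cotensor `F^K` of the diagram `F : Jᵒᵖ ⥤ C`
by the presheaf `K`: a representation, natural in `z`, of the functor
`z ↦ Hom(K, Hom_C(z, F -))`. -/
structure CotensorData (F : Jᵒᵖ ⥤ C) (K : Jᵒᵖ ⥤ Type u) : Type u where
  pt : C
  equiv : ∀ z : C, (z ⟶ pt) ≃ (K ⟶ F ⋙ coyoneda.obj (op z))
  natural : ∀ {z z' : C} (g : z' ⟶ z) (v : z ⟶ pt),
    equiv z' (g ≫ v) = equiv z v ≫ Functor.whiskerLeft F (coyoneda.map g.op)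

/-- The map `F^K ⟶ F'^K` induced by a morphism of diagrams `p : F ⟶ F'`. -/
def IsInducedMap {F F' : Jᵒᵖ ⥤ C} (p : F ⟶ F') {K : Jᵒᵖ ⥤ Type u}
    (dF : CotensorData F K) (dF' : CotensorData F' K) (m : dF.pt ⟶ dF'.pt) : Prop :=
  dF'.equiv dF.pt m =
    dF.equiv dF.pt (𝟙 dF.pt) ≫ Functor.whiskerRight p (coyoneda.obj (op dF.pt))

/-- The map `F^L ⟶ F^K` induced by a morphism of presheaves `i : K ⟶ L`. -/
def IsRestrictionMap {F : Jᵒᵖ ⥤ C} {K L : Jᵒᵖ ⥤ Type u} (i : K ⟶ L)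
    (dL : CotensorData F L) (dK : CotensorData F K) (m : dL.pt ⟶ dK.pt) : Prop :=
  dK.equiv dL.pt m = i ≫ dL.equiv dL.pt (𝟙 dL.pt)

section Day

variable [MonoidalCategory J]

/-- Indexing data for the coend defining the Day convolution
`(K ⊗ L)(x) = ∫^{i,j} K i × L j × Hom(x, i ⊗ j)`. -/
structure DayIdx (K L : Jᵒᵖ ⥤ Type u) (x : J) : Type u where
  i : J
  j : J
  k : K.obj (op i)
  l : L.obj (op j)
  f : x ⟶ MonoidalCategory.tensorObj i j

/-- The wedge relation for the Day convolution coend. -/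
def dayRel (K L : Jᵒᵖ ⥤ Type u) (x : J) : DayIdx K L x → DayIdx K L x → Prop :=
  fun a b =>
    ∃ (u : a.i ⟶ b.i) (v : a.j ⟶ b.j),
      a.k = K.map u.op b.k ∧ a.l = L.map v.op b.l ∧
        b.f = a.f ≫ MonoidalCategory.tensorHom u v

/-- The Day convolution (geometric product) of two presheaves on a monoidal
category, defined by the coend formula
`(K ⊗ L)(x) = ∫^{i,j} K i × L j × Hom(x, i ⊗ j)`. -/
def DayProd (K L : Jᵒᵖ ⥤ Type u) : Jᵒᵖ ⥤ Type u where
  obj x := Quot (dayRel K L x.unop)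
  map {x y} g :=
    TypeCat.ofHom (Quot.map (fun a => { a with f := g.unop ≫ a.f })
      (by
        rintro a b ⟨u, v, hk, hl, hf⟩
        try dsimp only
        exact ⟨u, v, hk, hl, by rw [hf, Category.assoc]⟩))
  map_id x := by
    ext a'
    revert a'
    apply Quot.ind
    intro a
    show Quot.mk _ _ = Quot.mk _ _
    have : (𝟙 x).unop ≫ a.f = a.f := Category.id_comp a.f
    exact congrArg (fun t => Quot.mk (dayRel K L x.unop) { a with f := t }) this
  map_comp {x y z} g h := by
    ext a'
    revert a'
    apply Quot.ind
    intro a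
    show Quot.mk _ _ = Quot.mk _ _
    have : (g ≫ h).unop ≫ a.f = h.unop ≫ (g.unop ≫ a.f) := by simp
    exact congrArg (fun t => Quot.mk (dayRel K L z.unop) { a with f := t }) this

/-- Functoriality of the Day convolution in both arguments. -/
def dayMap {K K' L L' : Jᵒᵖ ⥤ Type u} (φ : K ⟶ K') (ψ : L ⟶ L') :
    DayProd K L ⟶ DayProd K' L' where
  app x := TypeCat.ofHom (Quot.map
      (fun a => { a with k := φ.app (op a.i) a.k, l := ψ.app (op a.j) a.l })
      (by
        rintro a b ⟨u, v, hk, hl, hf⟩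
        dsimp only
        refine ⟨u, v, ?_, ?_, hf⟩
        · rw [hk]
          exact (ConcreteCategory.congr_hom (φ.naturality u.op) b.k)
        · rw [hl]
          exact (ConcreteCategory.congr_hom (ψ.naturality v.op) b.l)))
  naturality {x y} g := by
    ext a'
    revert a'
    apply Quot.ind
    intro a
    rfl

end Day

/-- A category has contractible nerve; we use the standard sufficient
formulation by a zig-zag of natural transformations connecting the identity
functor to a constant functor. -/
def HasContractibleNerve (J : Type u) [Category.{u} J] : Prop :=
  ∃ j : J, Zigzag (J := J ⥤ J) (𝟭 J) ((Functor.const J).obj j)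

/-- `h : e ⟶ c` is an internal product (pushforward) `Π_g f` of `f : a ⟶ b`
along `g : b ⟶ c`, relative to a class of fibrations. -/
def IsInternalProductWrt (fib : MorphismProperty C) {a b c : C}
    (f : a ⟶ b) (g : b ⟶ c) {e : C} (h : e ⟶ c) : Prop :=
  fib h ∧
    ∃ (Q : C) (π₁ : Q ⟶ e) (π₂ : Q ⟶ b) (_ : IsPullback π₁ π₂ h g) (ε : Q ⟶ a),
      ε ≫ f = π₂ ∧
      ∀ {x : C} (k : x ⟶ c) {P : C} (ρ₁ : P ⟶ x) (ρ₂ : P ⟶ b)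
        (_ : IsPullback ρ₁ ρ₂ k g) (m : P ⟶ a), m ≫ f = ρ₂ →
        ∃! w : x ⟶ e, w ≫ h = k ∧
          ∀ v : P ⟶ Q, v ≫ π₁ = ρ₁ ≫ w → v ≫ π₂ = ρ₂ → v ≫ ε = m

/-- A π-tribe: every fibration admits an internal product along any fibration. -/
def Tribe.IsPiTribe (T : Tribe C) : Prop :=
  ∀ {a b c : C} (f : a ⟶ b) (g : b ⟶ c), T.fib f → T.fib g →
    ∃ (e : C) (h : e ⟶ c), IsInternalProductWrt T.fib f g h

/-- A morphism of tribes: a functor preserving the terminal object, fibrations,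
anodyne maps, and pullbacks of fibrations. -/
def IsTribeMorphism {C₁ C₂ : Type u} [Category.{u} C₁] [Category.{u} C₂]
    (T₁ : Tribe C₁) (T₂ : Tribe C₂) (G : C₁ ⥤ C₂) : Prop :=
  Nonempty (IsTerminal (G.obj T₁.term)) ∧
  (∀ {a b : C₁} (f : a ⟶ b), T₁.fib f → T₂.fib (G.map f)) ∧
  (∀ {a b : C₁} (f : a ⟶ b), T₁.anodyne f → T₂.anodyne (G.map f)) ∧
  (∀ {P x y z : C₁} (fst : P ⟶ x) (snd : P ⟶ y) (f : x ⟶ z) (g : y ⟶ z),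
      IsPullback fst snd f g → T₁.fib g →
      IsPullback (G.map fst) (G.map snd) (G.map f) (G.map g))

/-- Cisinski's approximation properties (AP1) and (AP2), characterizing
DK-equivalences (functors inducing an equivalence of hammock localizations)
between fibration categories. -/
def IsDKEquivalence {C₁ C₂ : Type u} [Category.{u} C₁] [Category.{u} C₂]
    (weq₁ : MorphismProperty C₁) (weq₂ : MorphismProperty C₂) (G : C₁ ⥤ C₂) : Prop :=
  (∀ {a b : C₁} (f : a ⟶ b), weq₁ f ↔ weq₂ (G.map f)) ∧
  (∀ (y : C₂) (d : C₁) (f : y ⟶ G.obj d),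
    ∃ (d' : C₁) (g : d' ⟶ d) (v : y ⟶ G.obj d'),
      weq₂ v ∧ v ≫ G.map g = f)


section JTribe

variable (J : Type u) [Category.{u} J] (C : Type u) [Category.{u} C]

/-- A system of cotensors by presheaves on `J` for objects of `C`,
functorial contravariantly in the presheaf and covariantly in the object. -/
structure Cotensors : Type (u + 1) where
  cot : C → (Jᵒᵖ ⥤ Type u) → C
  cotMap : ∀ (a : C) {K L : Jᵒᵖ ⥤ Type u}, (K ⟶ L) → (cot a L ⟶ cot a K)
  cotObj : ∀ {a b : C}, (a ⟶ b) → ∀ K : Jᵒᵖ ⥤ Type u, (cot a K ⟶ cot b K)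
  cotMap_id : ∀ (a : C) (K : Jᵒᵖ ⥤ Type u), cotMap a (𝟙 K) = 𝟙 (cot a K)
  cotMap_comp : ∀ (a : C) {K L M : Jᵒᵖ ⥤ Type u} (f : K ⟶ L) (g : L ⟶ M),
    cotMap a (f ≫ g) = cotMap a g ≫ cotMap a f
  cotObj_id : ∀ (a : C) (K : Jᵒᵖ ⥤ Type u), cotObj (𝟙 a) K = 𝟙 (cot a K)
  cotObj_comp : ∀ {a b c : C} (f : a ⟶ b) (g : b ⟶ c) (K : Jᵒᵖ ⥤ Type u),
    cotObj (f ≫ g) K = cotObj f K ≫ cotObj g K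
  cot_comm : ∀ {a b : C} (p : a ⟶ b) {K L : Jᵒᵖ ⥤ Type u} (i : K ⟶ L),
    cotObj p L ≫ cotMap b i = cotMap a i ≫ cotObj p K

variable {J C}

/-- Natural families `K ⟶ Hom(z, a^{J^-})`, i.e. presheaf morphisms from `K`
to the enriched hom induced by a cotensor system (whose value at `j` is
`Hom_C(z, a^{J^j})`). -/
def Cotensors.EHomNat (S : Cotensors J C) (z a : C) (K : Jᵒᵖ ⥤ Type u) : Type u :=
  { φ : ∀ j : Jᵒᵖ, K.obj j → (z ⟶ S.cot a (yoneda.obj j.unop)) //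
    ∀ {j j' : Jᵒᵖ} (u : j ⟶ j') (k : K.obj j),
      φ j' (K.map u k) = φ j k ≫ S.cotMap a (yoneda.map u.unop) }

/-- A `J`-tribe structure on a tribe `T`: an enrichment over presheaves on `J`
(presented by its system of cotensors, the enriched hom being
`Hom(z,a)_j = Hom_C(z, a^{J^j})`) with cotensors by finite presheaves, such
that (1) cotensoring a fibration by a monomorphism of finite presheaves gives a
fibration as gap map, trivially so if the fibration is trivial; (2) cotensors
by representable morphisms are weak equivalences; and (3) cotensoring by a
finite presheaf preserves anodyne maps. -/
structure JTribeOn {C : Type u} [Category.{u} C] (J : Type u) [Category.{u} J]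
    (T : Tribe C) extends Cotensors J C : Type (u + 1) where
  univ : ∀ (a : C) (K : Jᵒᵖ ⥤ Type u), FinPsh K →
    ∃ e : ∀ z : C, (z ⟶ toCotensors.cot a K) ≃ toCotensors.EHomNat z a K,
      -- the representation is natural in `z`
      ∀ {z z' : C} (g : z' ⟶ z) (v : z ⟶ toCotensors.cot a K) (j : Jᵒᵖ) (k : K.obj j),
        ((e z') (g ≫ v)).val j k = g ≫ ((e z) v).val j k
  gap_fib : ∀ {K L : Jᵒᵖ ⥤ Type u} (i : K ⟶ L), Mono i → FinPsh K → FinPsh L →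
    ∀ {a b : C} (p : a ⟶ b), T.fib p →
    ∀ (P : C) (pr₁ : P ⟶ toCotensors.cot b L) (pr₂ : P ⟶ toCotensors.cot a K),
      IsPullback pr₁ pr₂ (toCotensors.cotMap b i) (toCotensors.cotObj p K) →
      ∀ gap : toCotensors.cot a L ⟶ P,
        gap ≫ pr₁ = toCotensors.cotObj p L → gap ≫ pr₂ = toCotensors.cotMap a i →
        T.fib gap ∧ (T.weq p → T.trivFib gap)
  rep_weq : ∀ {i j : J} (f : i ⟶ j) (a : C),
    T.weq (toCotensors.cotMap a (yoneda.map f))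
  anodyne_cot : ∀ (K : Jᵒᵖ ⥤ Type u), FinPsh K → ∀ {a b : C} (p : a ⟶ b),
    T.anodyne p → T.anodyne (toCotensors.cotObj p K)

end JTribe

section Frames

variable {C : Type u} [Category.{u} C]

/-- The category of `J`-frames in a tribe. -/
def JFrameCat (T : Tribe C) (J : Type u) [Category.{u} J] : Type u :=
  ObjectProperty.FullSubcategory (fun F : Jᵒᵖ ⥤ C => IsJFrame T F)

instance (T : Tribe C) (J : Type u) [Category.{u} J] : Category.{u} (JFrameCat T J) :=
  ObjectProperty.FullSubcategory.category _

variable {D R : Type u} [Category.{u} D] [Category.{u} R]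

/-- An `R`-frame relative to a projection `p : D ⥤ R`: a homotopical diagram
`F : Rᵒᵖ ⥤ C` such that `p^*F` is Reedy fibrant. -/
def IsRelFrame (T : Tribe C) (p : D ⥤ R) (F : Rᵒᵖ ⥤ C) : Prop :=
  Homotopical T F ∧ ReedyFibrant T (p.op ⋙ F)

/-- The category of `R`-frames relative to `p : D ⥤ R`. -/
def RelFrameCat (T : Tribe C) (p : D ⥤ R) : Type u :=
  ObjectProperty.FullSubcategory (fun F : Rᵒᵖ ⥤ C => IsRelFrame T p F)

instance (T : Tribe C) (p : D ⥤ R) : Category.{u} (RelFrameCat T p) :=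
  ObjectProperty.FullSubcategory.category _

/-- `p`-fibrations: maps whose image under `p^*` is a Reedy fibration. -/
def pFib (T : Tribe C) (p : D ⥤ R) {F F' : Rᵒᵖ ⥤ C} (φ : F ⟶ F') : Prop :=
  ReedyFib T (Functor.whiskerLeft p.op φ)

/-- Trivial `p`-fibrations: maps whose image under `p^*` is a Reedy trivial
fibration. -/
def pTrivFib (T : Tribe C) (p : D ⥤ R) {F F' : Rᵒᵖ ⥤ C} (φ : F ⟶ F') : Prop :=
  ReedyTrivFib T (Functor.whiskerLeft p.op φ)

/-- Anodyne maps relative to the tribe structure on `R`-frames: maps with the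
left lifting property against all `p`-fibrations between `R`-frames. -/
def pAnodyne (T : Tribe C) (p : D ⥤ R) {F F' : Rᵒᵖ ⥤ C} (i : F ⟶ F') : Prop :=
  ∀ {G G' : Rᵒᵖ ⥤ C} (q : G ⟶ G'), IsRelFrame T p G → IsRelFrame T p G' →
    pFib T p q → HasLiftingProperty i q

/-- The restriction functor `p^*` on presheaves of sets. -/
def restrictionPsh (p : D ⥤ R) : (Rᵒᵖ ⥤ Type u) ⥤ (Dᵒᵖ ⥤ Type u) :=
  (Functor.whiskeringLeft Dᵒᵖ Rᵒᵖ (Type u)).obj p.op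

/-- A functor is absolutely dense if the restriction along it is fully
faithful on presheaves. -/
def AbsolutelyDense (p : D ⥤ R) : Prop :=
  (restrictionPsh p).Full ∧ (restrictionPsh p).Faithful

end Frames

section DConstruction

/-- The twisted arrow category of `E`: objects are arrows of `E`, morphisms
from `f : a ⟶ b` to `g : a' ⟶ b'` are pairs `(u : a' ⟶ a, v : b ⟶ b')` with
`u ≫ f ≫ v = g`. -/
structure Tw (E : Type u) [Category.{u} E] : Type u where
  left : E
  right : E
  hom : left ⟶ right

instance (E : Type u) [Category.{u} E] : Category.{u} (Tw E) where
  Hom t s := { uv : (s.left ⟶ t.left) × (t.right ⟶ s.right) // uv.1 ≫ t.hom ≫ uv.2 = s.hom }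
  id t := ⟨(𝟙 _, 𝟙 _), by simp⟩
  comp {t s r} f g := ⟨(g.val.1 ≫ f.val.1, f.val.2 ≫ g.val.2), by
    have h : g.val.1 ≫ (f.val.1 ≫ t.hom ≫ f.val.2) ≫ g.val.2 = r.hom := by
      rw [f.property]; exact g.property
    simpa only [Category.assoc] using h⟩
  id_comp := by intros; apply Subtype.ext; dsimp; ext <;> simp
  comp_id := by intros; apply Subtype.ext; dsimp; ext <;> simp
  assoc := by intros; apply Subtype.ext; dsimp; ext <;> simp

/-- The codomain projection of the twisted arrow category. -/
@[simps]
def twRight (E : Type u) [Category.{u} E] : Tw E ⥤ E where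
  obj t := t.right
  map f := f.val.2
  map_id := by intros; rfl
  map_comp := by intros; rfl

variable {R₀ R : Type u} [Category.{u} R₀] [Category.{u} R]

/-- The relations presenting the pushout `F_≃(R)` of the counit
`F(R₀) → R₀` along `F(c) : F(R₀) → F(R)`, where `F` is the free category
comonad: two paths of arrows of `R` coming from paths in `R₀` with equal
composites are identified. -/
inductive PushRel (c : R₀ ⥤ R) : HomRel (Paths R)
  | mk {x y : R₀} (σ τ : Quiver.Path x y) (h : composePath σ = composePath τ) :
      PushRel c (c.toPrefunctor.mapPath σ) (c.toPrefunctor.mapPath τ)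

/-- The pushout `F_≃(R)` of the counit `F(R₀) → R₀` along `F(c)`. -/
def FIso (c : R₀ ⥤ R) : Type u := CategoryTheory.Quotient (PushRel c)

instance (c : R₀ ⥤ R) : Category.{u} (FIso c) :=
  inferInstanceAs (Category (CategoryTheory.Quotient (PushRel c)))

/-- The quotient functor `F(R) = Paths R ⥤ F_≃(R)`. -/
def qFunctor (c : R₀ ⥤ R) : Paths R ⥤ FIso c :=
  CategoryTheory.Quotient.functor (PushRel c)

/-- The canonical functor `F(R) = Paths R ⥤ R` composing a path. -/
def pathsCompose (R : Type u) [Category.{u} R] : Paths R ⥤ R :=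
  Paths.lift (Functor.id R).toPrefunctor

theorem pathsCompose_mapPath (c : R₀ ⥤ R) {x y : R₀} (σ : Quiver.Path x y) :
    (pathsCompose R).map (c.toPrefunctor.mapPath σ) = c.map (composePath σ) := by
  induction σ with
  | nil =>
      show (Paths.lift (Functor.id R).toPrefunctor).map Quiver.Path.nil = c.map (𝟙 x)
      rw [Paths.lift_nil, c.map_id]
      rfl
  | cons p e ih =>
      show (Paths.lift (Functor.id R).toPrefunctor).map
          ((c.toPrefunctor.mapPath p).cons (c.map e)) = c.map (composePath p ≫ e)
      show (pathsCompose R).map (c.toPrefunctor.mapPath p) ≫ (Functor.id R).map (c.map e) =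
        c.map (composePath p ≫ e)
      rw [ih, c.map_comp]
      rfl

/-- The projection `p₀ : F_≃(R) ⥤ R` induced by the pushout property. -/
def fisoToBase (c : R₀ ⥤ R) : FIso c ⥤ R :=
  CategoryTheory.Quotient.lift (PushRel c) (pathsCompose R)
    (by
      rintro X Y f g ⟨σ, τ, h⟩
      rw [pathsCompose_mapPath, pathsCompose_mapPath, h])

/-- The underlying object of `R` of an object of `F_≃(R)`. -/
def asR {c : R₀ ⥤ R} (X : FIso c) : R := X.as

/-- A morphism of `F_≃(R)` comes from a map in `R₀`. -/
def FromBase (c : R₀ ⥤ R) {X Y : FIso c} (f : X ⟶ Y) : Prop :=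
  ∃ (x y : R₀) (k : x ⟶ y) (hX : X = (qFunctor c).obj (c.obj x))
    (hY : Y = (qFunctor c).obj (c.obj y)),
    f = eqToHom hX ≫ (qFunctor c).map ((Paths.of R).map (c.map k)) ≫ eqToHom hY.symm

/-- A morphism of `F_≃(R)` is a "free" isomorphism of `R` (the image of a path
of length one whose underlying arrow is an isomorphism) or an identity. -/
def FreeIsoOrId (c : R₀ ⥤ R) {X Y : FIso c} (f : X ⟶ Y) : Prop :=
  (∃ h : X = Y, f = eqToHom h) ∨
    ∃ (w : asR X ⟶ asR Y), IsIso w ∧ f = (qFunctor c).map ((Paths.of R).map w)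

/-- The direct category `D_R`: the full subcategory of the twisted arrow
category of `F_≃(R)` spanned by the arrows of the form `x → z → y` with
`x → z` coming from a map in `R₀` and `z → y` a free isomorphism of `R` or an
identity. -/
def DCat (c : R₀ ⥤ R) : Type u :=
  ObjectProperty.FullSubcategory (fun t : Tw (FIso c) =>
    ∃ (Z : FIso c) (g : t.left ⟶ Z) (h : Z ⟶ t.right),
      FromBase c g ∧ FreeIsoOrId c h ∧ g ≫ h = t.hom)

instance (c : R₀ ⥤ R) : Category.{u} (DCat c) := ObjectProperty.FullSubcategory.category _

/-- The canonical projection `p : D_R ⥤ R` (on objects, an object `x → y` of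
`D_R` is sent to the codomain `y`). -/
def projD (c : R₀ ⥤ R) : DCat c ⥤ R :=
  ObjectProperty.ι _ ⋙ twRight (FIso c) ⋙ fisoToBase c

/-- The full subcategory `(D_R)_{≤ n}` of `D_R` spanned by the objects whose
codomain has degree at most `n`. -/
def DCatLE (c : R₀ ⥤ R) (degR : R → ℕ) (n : ℕ) : Type u :=
  ObjectProperty.FullSubcategory (fun d : DCat c => degR ((projD c).obj d) ≤ n)

instance (c : R₀ ⥤ R) (degR : R → ℕ) (n : ℕ) : Category.{u} (DCatLE c degR n) :=
  ObjectProperty.FullSubcategory.category _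

end DConstruction

section Cubes

/-- The symmetric semi-cube category with reversals `□^s_♯`: the free symmetric
monoidal category on two maps `δ₀ δ₁ : I⁰ ⟶ I¹` and an involution `r : I¹ ⟶ I¹`.
Concretely, objects are the tensor powers `Iⁿ` (encoded by natural numbers). -/
def SemiCube : Type := ℕ

/-- A morphism `Iⁿ ⟶ Iᵐ` of `□^s_♯`: each output coordinate is either a
constant `0`/`1` (a face) or an input coordinate, possibly reversed; every
input coordinate is used exactly once. -/
@[ext]
structure CubeHom (n m : ℕ) : Type where
  out : Fin m → (Fin n × Bool) ⊕ Bool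
  uniq : ∀ i : Fin n, ∃! j : Fin m, ∃ b : Bool, out j = Sum.inl (i, b)

/-- The identity cube morphism. -/
def CubeHom.id (n : ℕ) : CubeHom n n where
  out j := Sum.inl (j, false)
  uniq i := ⟨i, ⟨false, rfl⟩, by rintro j ⟨b, hb⟩; simpa using (Prod.ext_iff.mp (Sum.inl.inj hb)).1⟩

/-- The underlying output function of the composite of cube morphisms. -/
def CubeHom.compOut {n m k : ℕ} (f : CubeHom n m) (g : CubeHom m k) :
    Fin k → (Fin n × Bool) ⊕ Bool := fun j =>
  match g.out j with
  | .inr b => .inr b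
  | .inl (i', b') =>
      match f.out i' with
      | .inr b => .inr (xor b' b)
      | .inl (i, b) => .inl (i, xor b b')

theorem CubeHom.compOut_inl {n m k : ℕ} (f : CubeHom n m) (g : CubeHom m k)
    {j : Fin k} {i' : Fin m} {b' : Bool} (hg : g.out j = .inl (i', b')) :
    (∀ {i b}, f.out i' = .inl (i, b) → f.compOut g j = .inl (i, xor b b')) ∧
    (∀ {b}, f.out i' = .inr b → f.compOut g j = .inr (xor b' b)) := by
  constructor
  · intro i b hf
    simp only [compOut, hg, hf]
  · intro b hf
    simp only [compOut, hg, hf]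

theorem CubeHom.compOut_inr {n m k : ℕ} (f : CubeHom n m) (g : CubeHom m k)
    {j : Fin k} {b : Bool} (hg : g.out j = .inr b) :
    f.compOut g j = .inr b := by
  simp only [compOut, hg]

/-- Composition of cube morphisms. -/
def CubeHom.comp {n m k : ℕ} (f : CubeHom n m) (g : CubeHom m k) : CubeHom n k where
  out := f.compOut g
  uniq i := by
    obtain ⟨i', hi', hi'u⟩ := f.uniq i
    obtain ⟨b₁, hb₁⟩ := hi'
    obtain ⟨j, hj, hju⟩ := g.uniq i'
    obtain ⟨b₂, hb₂⟩ := hj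
    refine ⟨j, ⟨xor b₁ b₂, (f.compOut_inl g hb₂).1 hb₁⟩, ?_⟩
    rintro j₀ ⟨b₀, hb₀⟩
    rcases hg : g.out j₀ with ⟨i₀', b₀'⟩ | b
    · rcases hf : f.out i₀' with ⟨i₀, bb⟩ | cst
      · rw [(f.compOut_inl g hg).1 hf] at hb₀
        have h1 : i₀ = i := by simpa using (Prod.ext_iff.mp (Sum.inl.inj hb₀)).1
        subst h1
        have h2 : i₀' = i' := hi'u i₀' ⟨bb, hf⟩
        subst h2
        exact hju j₀ ⟨b₀', hg⟩
      · rw [(f.compOut_inl g hg).2 hf] at hb₀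
        simp at hb₀
    · rw [f.compOut_inr g hg] at hb₀
      simp at hb₀

instance : Category.{0} SemiCube where
  Hom n m := CubeHom n m
  id n := CubeHom.id n
  comp f g := f.comp g
  id_comp f := by
    apply CubeHom.ext
    funext j
    show (CubeHom.id _).compOut f j = f.out j
    rcases hf : f.out j with ⟨i', b'⟩ | b
    · rw [((CubeHom.id _).compOut_inl f hf).1 rfl]
      simp
    · rw [(CubeHom.id _).compOut_inr f hf]
  comp_id f := by
    apply CubeHom.ext
    funext j
    show f.compOut (CubeHom.id _) j = f.out j
    rcases hf : f.out j with ⟨i', b'⟩ | b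
    · rw [(f.compOut_inl (CubeHom.id _) rfl).1 hf]
      simp
    · rw [(f.compOut_inl (CubeHom.id _) rfl).2 hf]
      simp
  assoc f g h := by
    apply CubeHom.ext
    funext j
    show (f.comp g).compOut h j = f.compOut (g.comp h) j
    rcases hh : h.out j with ⟨j'', b''⟩ | b
    · rcases hg : g.out j'' with ⟨i', b'⟩ | cst
      · rcases hf : f.out i' with ⟨i, b⟩ | cst'
        · rw [((f.comp g).compOut_inl h hh).1 ((f.compOut_inl g hg).1 hf),
            (f.compOut_inl (g.comp h) ((g.compOut_inl h hh).1 hg)).1 hf]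
          congr 1
          cases b <;> cases b' <;> cases b'' <;> rfl
        · rw [((f.comp g).compOut_inl h hh).2 ((f.compOut_inl g hg).2 hf),
            (f.compOut_inl (g.comp h) ((g.compOut_inl h hh).1 hg)).2 hf]
          congr 1
          cases cst' <;> cases b' <;> cases b'' <;> rfl
      · rw [((f.comp g).compOut_inl h hh).2 ((f.compOut_inr g hg)),
          f.compOut_inr (g.comp h) ((g.compOut_inl h hh).2 hg)]
    · rw [(f.comp g).compOut_inr h hh, f.compOut_inr (g.comp h) (g.compOut_inr h hh)]

/-- The face maps `δ_b : I⁰ ⟶ I¹`. -/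
def cubeFace (b : Bool) : CubeHom 0 1 where
  out _ := Sum.inr b
  uniq i := i.elim0

/-- The reversal `r : I¹ ⟶ I¹`. -/
def cubeReversal : CubeHom 1 1 where
  out j := Sum.inl (j, true)
  uniq i := ⟨i, ⟨true, rfl⟩, by rintro j ⟨b, hb⟩; simpa using (Prod.ext_iff.mp (Sum.inl.inj hb)).1⟩

/-- A cube morphism is a tensor product of copies of identities and of the
face maps `δ₀`, `δ₁`: no reversals occur and the input coordinates appear in
order. -/
def IsFaceTensor {n m : ℕ} (f : CubeHom n m) : Prop :=
  (∀ (j : Fin m) (i : Fin n) (b : Bool), f.out j = Sum.inl (i, b) → b = false) ∧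
  (∀ (j j' : Fin m) (i i' : Fin n) (b b' : Bool),
    f.out j = Sum.inl (i, b) → f.out j' = Sum.inl (i', b') → (j < j' ↔ i < i'))

/-- The augmented semi-simplex category `Δ_{a,♯}`: finite ordinals (including
the empty one) and injective monotone maps; the object `k` represents the
ordinal `[k-1]` with `k` elements. -/
def AugSimplex : Type := ℕ

instance : Category.{0} AugSimplex where
  Hom (k l : ℕ) := { φ : Fin k → Fin l // StrictMono φ }
  id (k : ℕ) := ⟨fun i => i, strictMono_id⟩
  comp {k l m : ℕ} φ ψ := ⟨ψ.val ∘ φ.val, ψ.property.comp φ.property⟩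
  id_comp φ := rfl
  comp_id φ := rfl
  assoc φ ψ χ := rfl

/-- The output function of the cube morphism associated to an injective
monotone map. -/
noncomputable def stcOut {k l : ℕ} (φ : { f : Fin k → Fin l // StrictMono f })
    (j : Fin l) : (Fin k × Bool) ⊕ Bool :=
  if h : ∃ i, φ.val i = j then Sum.inl (h.choose, false) else Sum.inr false

theorem stcOut_eq {k l : ℕ} (φ : { f : Fin k → Fin l // StrictMono f }) (i : Fin k) :
    stcOut φ (φ.val i) = Sum.inl (i, false) := by
  have h : ∃ i', φ.val i' = φ.val i := ⟨i, rfl⟩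
  rw [stcOut, dif_pos h]
  have : h.choose = i := φ.property.injective h.choose_spec
  rw [this]

theorem stcOut_neg {k l : ℕ} (φ : { f : Fin k → Fin l // StrictMono f }) {j : Fin l}
    (h : ¬ ∃ i, φ.val i = j) : stcOut φ j = Sum.inr false := by
  rw [stcOut, dif_neg h]

/-- The cube morphism associated to an injective monotone map: insert the
`0`-face in the coordinates missing from the image. -/
noncomputable def stcHom {k l : ℕ} (φ : { f : Fin k → Fin l // StrictMono f }) :
    CubeHom k l where
  out := stcOut φ
  uniq := by
    intro i
    refine ⟨φ.val i, ⟨false, stcOut_eq φ i⟩, ?_⟩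
    rintro j ⟨b, hb⟩
    by_cases h : ∃ i', φ.val i' = j
    · rw [stcOut, dif_pos h] at hb
      have h1 : h.choose = i := by simpa using (Prod.ext_iff.mp (Sum.inl.inj hb)).1
      rw [← h.choose_spec, h1]
    · rw [stcOut_neg φ h] at hb
      simp at hb

/-- The monoidal functor `r : Δ_{a,♯} ⥤ □^s_♯`, sending `[n]` to `I^{n+1}` and
the unique map `[-1] → [0]` to `δ₀`: an injective monotone map is sent to the
cube morphism inserting the `0`-face in the missing coordinates. -/
noncomputable def toCube : AugSimplex ⥤ SemiCube where
  obj k := k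
  map {k l} φ := stcHom φ
  map_id k := by
    apply CubeHom.ext
    funext j
    exact stcOut_eq (𝟙 (k : AugSimplex) : _) j
  map_comp {a b c} φ ψ := by
    apply CubeHom.ext
    funext j
    show stcOut (φ ≫ ψ) j = (stcHom φ).compOut (stcHom ψ) j
    by_cases hc : ∃ i, (φ ≫ ψ : _).val i = j
    · rw [← hc.choose_spec]
      rw [show ((φ ≫ ψ : _).val hc.choose) = ψ.val (φ.val hc.choose) from rfl]
      rw [show stcOut (φ ≫ ψ) (ψ.val (φ.val hc.choose)) = Sum.inl (hc.choose, false) from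
        stcOut_eq (φ ≫ ψ) hc.choose]
      rw [((stcHom φ).compOut_inl (stcHom ψ) (stcOut_eq ψ (φ.val hc.choose))).1
        (stcOut_eq φ hc.choose)]
      rfl
    · rw [stcOut_neg (φ ≫ ψ) hc]
      by_cases hψ : ∃ i', ψ.val i' = j
      · obtain ⟨i', hi'⟩ := hψ
        rw [← hi']
        by_cases hφ : ∃ i, φ.val i = i'
        · obtain ⟨i, hi⟩ := hφ
          exact absurd (⟨i, by
            rw [show ((φ ≫ ψ : _).val i : Fin _) = ψ.val (φ.val i) from rfl, hi, hi']⟩ :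
              ∃ i0, (φ ≫ ψ : _).val i0 = j) hc
        · rw [((stcHom φ).compOut_inl (stcHom ψ) (stcOut_eq ψ i')).2 (stcOut_neg φ hφ)]
          rfl
      · rw [(stcHom φ).compOut_inr (stcHom ψ) (stcOut_neg ψ hψ)]

end Cubes

section Misc

variable {C : Type u} [Category.{u} C] {J : Type u} [Category.{u} J]

/-- The canonical frame associated to an object `x` by a cotensor system:
the diagram `r ↦ x^{J^r}`. -/
@[simps]
def Cotensors.canonicalFrame (S : Cotensors J C) (x : C) : Jᵒᵖ ⥤ C where
  obj r := S.cot x (yoneda.obj r.unop)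
  map {r r'} u := S.cotMap x (yoneda.map u.unop)
  map_id r := by
    show S.cotMap x (yoneda.map (𝟙 r).unop) = _
    rw [unop_id, CategoryTheory.Functor.map_id, S.cotMap_id]
  map_comp {r r' r''} u v := by
    show S.cotMap x (yoneda.map (u ≫ v).unop) = _
    rw [unop_comp, Functor.map_comp, S.cotMap_comp]

/-- The map of canonical frames induced by a morphism. -/
@[simps]
def Cotensors.canonicalFrameMap (S : Cotensors J C) {x y : C} (f : x ⟶ y) :
    S.canonicalFrame x ⟶ S.canonicalFrame y where
  app r := S.cotObj f (yoneda.obj r.unop)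
  naturality {r r'} u := (S.cot_comm f (yoneda.map u.unop)).symm

variable {D R : Type u} [Category.{u} D] [Category.{u} R]

/-- Pointwise weak equivalences of `R`-frames. -/
def frameWeq (T : Tribe C) (p : D ⥤ R) : MorphismProperty (RelFrameCat T p) :=
  fun F G φ => ∀ r : Rᵒᵖ, T.weq (NatTrans.app (F := F.obj) (G := G.obj) φ.hom r)

/-- The evaluation functor of `R`-frames at an object `O` of `R`. -/
def evalAt (T : Tribe C) (p : D ⥤ R) (O : R) : RelFrameCat T p ⥤ C :=
  ObjectProperty.ι _ ⋙ (CategoryTheory.evaluation Rᵒᵖ C).obj (op O)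

/-- Strong monoidal structure data for a functor between monoidal categories. -/
structure StrongMonoidalData (A B : Type u) [Category.{u} A] [Category.{u} B]
    [MonoidalCategory A] [MonoidalCategory B] (c : A ⥤ B) : Type u where
  ε : c.obj (𝟙_ A) ≅ 𝟙_ B
  μ : ∀ x y : A, MonoidalCategory.tensorObj (c.obj x) (c.obj y) ≅ c.obj (MonoidalCategory.tensorObj x y)
  μ_natural : ∀ {x x' y y' : A} (f : x ⟶ x') (g : y ⟶ y'),
    MonoidalCategory.tensorHom (c.map f) (c.map g) ≫ (μ x' y').hom =
      (μ x y).hom ≫ c.map (MonoidalCategory.tensorHom f g)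

/-- The Reedy fibrations as a morphism property of the diagram category. -/
def reedyFibProp (T : Tribe C) (J : Type u) [Category.{u} J] :
    MorphismProperty (Jᵒᵖ ⥤ C) :=
  fun _ _ q => ReedyFib T q

end Misc


/-!
Compute `p_!` by its coend formula, which is left adjoint to restriction along `p` and hence
agrees with `p.op.lan`. By co-Yoneda, `p_!(K ⊗ L)(x) = ∫^{i,j} K i × L j × R(x, p (i ⊗ j))`,
while `(p_!K ⊗ p_!L)(x) = ∫^{i,j} K i × L j × R(x, p i ⊗ p j)`; the structure isomorphisms
`μ : p i ⊗ p j ≅ p (i ⊗ j)` identify the two, naturally in `K` and `L`. For the unit, `p_!`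
sends the representable at `d` to the representable at `p d`, and `ε : p 𝟙 ≅ 𝟙`.
-/

section LeftKanExtension

variable {D R : Type u} [Category.{u} D] [Category.{u} R] (p : D ⥤ R)

structure LanIdx (M : Dᵒᵖ ⥤ Type u) (x : R) : Type u where
  d : D
  m : M.obj (op d)
  f : x ⟶ p.obj d

def lanRel (M : Dᵒᵖ ⥤ Type u) (x : R) : LanIdx p M x → LanIdx p M x → Prop := fun a b =>
  ∃ u : a.d ⟶ b.d, a.m = M.map u.op b.m ∧ b.f = a.f ≫ p.map u

/-- The coend formula `(p_! M)(x) = ∫^d M d × R(x, p d)`. -/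
def LanPsh (M : Dᵒᵖ ⥤ Type u) : Rᵒᵖ ⥤ Type u where
  obj x := Quot (lanRel p M x.unop)
  map g := TypeCat.ofHom (Quot.map (fun a => { a with f := g.unop ≫ a.f })
    fun _ _ ⟨u, hm, hf⟩ => ⟨u, hm, by simp [hf]⟩)
  map_id x := by ext ⟨⟨d, m, f⟩⟩; change Quot.mk _ _ = _; simp
  map_comp g h := by ext ⟨⟨d, m, f⟩⟩; change Quot.mk _ _ = Quot.mk _ _; simp

variable {p}

def LanPsh.mk {M : Dᵒᵖ ⥤ Type u} {x : R} (d : D) (m : M.obj (op d)) (f : x ⟶ p.obj d) :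
    (LanPsh p M).obj (op x) :=
  Quot.mk _ ⟨d, m, f⟩

@[elab_as_elim]
theorem LanPsh.induction_on {M : Dᵒᵖ ⥤ Type u} {x : R} {P : (LanPsh p M).obj (op x) → Prop}
    (t : (LanPsh p M).obj (op x)) (h : ∀ d m f, P (LanPsh.mk d m f)) : P t :=
  Quot.ind (fun ⟨d, m, f⟩ => h d m f) t

theorem LanPsh.mk_eq_mk {M : Dᵒᵖ ⥤ Type u} {x : R} {d d' : D} (u : d ⟶ d')
    {m : M.obj (op d)} {m' : M.obj (op d')} {f : x ⟶ p.obj d} {f' : x ⟶ p.obj d'}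
    (hm : m = M.map u.op m') (hf : f' = f ≫ p.map u) : LanPsh.mk d m f = LanPsh.mk d' m' f' :=
  Quot.sound ⟨u, hm, hf⟩

@[simp]
theorem LanPsh.map_mk {M : Dᵒᵖ ⥤ Type u} {x y : R} (g : y ⟶ x) (d : D) (m : M.obj (op d))
    (f : x ⟶ p.obj d) : (LanPsh p M).map g.op (LanPsh.mk d m f) = LanPsh.mk d m (g ≫ f) :=
  rfl

variable (p)

def lanFunctor : (Dᵒᵖ ⥤ Type u) ⥤ (Rᵒᵖ ⥤ Type u) where
  obj := LanPsh p
  map φ :=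
    { app x := TypeCat.ofHom (Quot.map (fun a => { a with m := φ.app (op a.d) a.m })
        fun a b ⟨u, hm, hf⟩ => ⟨u, by simp [hm], hf⟩)
      naturality _ _ _ := by ext ⟨_⟩; rfl }
  map_id _ := by ext _ ⟨_⟩; rfl
  map_comp _ _ := by ext _ ⟨_⟩; rfl

variable {p}

def lanDesc {M : Dᵒᵖ ⥤ Type u} {G : Rᵒᵖ ⥤ Type u} (α : M ⟶ p.op ⋙ G) : LanPsh p M ⟶ G where
  app x := TypeCat.ofHom (Quot.lift (fun a => G.map a.f.op (α.app (op a.d) a.m))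
    fun a b ⟨u, hm, hf⟩ => by
      simp [hm, hf, NatTrans.naturality_apply])
  naturality _ _ g := by
    ext ⟨⟨d, m, f⟩⟩
    change G.map (g.unop ≫ f).op _ = G.map g (G.map f.op _)
    simp

@[simp]
theorem lanDesc_app_mk {M : Dᵒᵖ ⥤ Type u} {G : Rᵒᵖ ⥤ Type u} (α : M ⟶ p.op ⋙ G) {x : R}
    (d : D) (m : M.obj (op d)) (f : x ⟶ p.obj d) :
    (lanDesc α).app (op x) (LanPsh.mk d m f) = G.map f.op (α.app (op d) m) :=
  rfl

variable (p)

def lanPshUnit (M : Dᵒᵖ ⥤ Type u) : M ⟶ p.op ⋙ LanPsh p M where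
  app d := TypeCat.ofHom fun m => LanPsh.mk d.unop m (𝟙 _)
  naturality _ _ u := by
    ext m
    exact LanPsh.mk_eq_mk u.unop rfl (by simp)

def lanPshAdjunction : lanFunctor p ⊣ (Functor.whiskeringLeft _ _ (Type u)).obj p.op :=
  Adjunction.mkOfHomEquiv
    { homEquiv M G :=
        { toFun β := lanPshUnit p M ≫ Functor.whiskerLeft p.op β
          invFun := lanDesc
          left_inv β := by
            ext ⟨x⟩ t
            induction t using LanPsh.induction_on with
            | h d m f =>
              refine (NatTrans.naturality_apply (F := LanPsh p M) β f.op
                (LanPsh.mk d m (𝟙 _))).symm.trans ?_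
              simp
          right_inv α := by ext ⟨d⟩ m; simp [lanPshUnit] }
      homEquiv_naturality_left_symm φ α := by ext x t; induction t using LanPsh.induction_on; rfl
      homEquiv_naturality_right β g := rfl }

end LeftKanExtension

section Day

variable {J : Type u} [Category.{u} J] [MonoidalCategory J]

def DayProd.mk {K L : Jᵒᵖ ⥤ Type u} {x : J} (i j : J) (k : K.obj (op i)) (l : L.obj (op j))
    (f : x ⟶ i ⊗ j) : (DayProd K L).obj (op x) :=
  Quot.mk _ ⟨i, j, k, l, f⟩

@[elab_as_elim]
theorem DayProd.induction_on {K L : Jᵒᵖ ⥤ Type u} {x : J} {P : (DayProd K L).obj (op x) → Prop}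
    (t : (DayProd K L).obj (op x)) (h : ∀ i j k l f, P (DayProd.mk i j k l f)) : P t :=
  Quot.ind (fun ⟨i, j, k, l, f⟩ => h i j k l f) t

theorem DayProd.mk_eq_mk {K L : Jᵒᵖ ⥤ Type u} {x i i' j j' : J} (u : i ⟶ i') (v : j ⟶ j')
    {k : K.obj (op i)} {k' : K.obj (op i')} {l : L.obj (op j)} {l' : L.obj (op j')}
    {f : x ⟶ i ⊗ j} {f' : x ⟶ i' ⊗ j'} (hk : k = K.map u.op k') (hl : l = L.map v.op l')
    (hf : f' = f ≫ (u ⊗ₘ v)) : DayProd.mk i j k l f = DayProd.mk i' j' k' l' f' :=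
  Quot.sound ⟨u, v, hk, hl, hf⟩

@[simp]
theorem DayProd.map_mk {K L : Jᵒᵖ ⥤ Type u} {x y : J} (g : y ⟶ x) (i j : J) (k : K.obj (op i))
    (l : L.obj (op j)) (f : x ⟶ i ⊗ j) :
    (DayProd K L).map g.op (DayProd.mk i j k l f) = DayProd.mk i j k l (g ≫ f) :=
  rfl

theorem dayMap_comp {K K' K'' L L' L'' : Jᵒᵖ ⥤ Type u} (φ : K ⟶ K') (φ' : K' ⟶ K'')
    (ψ : L ⟶ L') (ψ' : L' ⟶ L'') : dayMap (φ ≫ φ') (ψ ≫ ψ') = dayMap φ ψ ≫ dayMap φ' ψ' := by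
  ext ⟨x⟩ t
  induction t using DayProd.induction_on
  rfl

theorem dayMap_id (K L : Jᵒᵖ ⥤ Type u) : dayMap (𝟙 K) (𝟙 L) = 𝟙 (DayProd K L) := by
  ext ⟨x⟩ t
  induction t using DayProd.induction_on
  rfl

@[simps]
def dayIso {K K' L L' : Jᵒᵖ ⥤ Type u} (e : K ≅ K') (e' : L ≅ L') :
    DayProd K L ≅ DayProd K' L' where
  hom := dayMap e.hom e'.hom
  inv := dayMap e.inv e'.inv
  hom_inv_id := by rw [← dayMap_comp, e.hom_inv_id, e'.hom_inv_id, dayMap_id]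
  inv_hom_id := by rw [← dayMap_comp, e.inv_hom_id, e'.inv_hom_id, dayMap_id]

def dayDesc {K L G : Jᵒᵖ ⥤ Type u}
    (β : ∀ i j : J, K.obj (op i) → L.obj (op j) → G.obj (op (i ⊗ j)))
    (hβ : ∀ {i i' j j' : J} (u : i ⟶ i') (v : j ⟶ j') k l,
      β i j (K.map u.op k) (L.map v.op l) = G.map (u ⊗ₘ v).op (β i' j' k l)) :
    DayProd K L ⟶ G where
  app x := TypeCat.ofHom (Quot.lift (fun a => G.map a.f.op (β a.i a.j a.k a.l))
    fun a b ⟨u, v, hk, hl, hf⟩ => by simp [hk, hl, hf, hβ])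
  naturality _ _ g := by
    ext ⟨⟨i, j, k, l, f⟩⟩
    change G.map (g.unop ≫ f).op _ = G.map g (G.map f.op _)
    simp

end Day

section Monoidal

variable {D R : Type u} [Category.{u} D] [Category.{u} R] [MonoidalCategory D]
  [MonoidalCategory R]

theorem StrongMonoidalData.μ_inv_natural {p : D ⥤ R} (hp : StrongMonoidalData D R p)
    {i i' j j' : D} (u : i ⟶ i') (v : j ⟶ j') :
    (hp.μ i j).inv ≫ (p.map u ⊗ₘ p.map v) = p.map (u ⊗ₘ v) ≫ (hp.μ i' j').inv := by
  rw [Iso.inv_comp_eq, ← Category.assoc, ← hp.μ_natural, Category.assoc, Iso.hom_inv_id,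
    Category.comp_id]

variable {p : D ⥤ R} (hp : StrongMonoidalData D R p) (K L : Dᵒᵖ ⥤ Type u)

def lanDayToDayLan : LanPsh p (DayProd K L) ⟶ DayProd (LanPsh p K) (LanPsh p L) :=
  lanDesc <| dayDesc
    (G := p.op ⋙ DayProd (LanPsh p K) (LanPsh p L))
    (fun i j k l => DayProd.mk (p.obj i) (p.obj j) (LanPsh.mk i k (𝟙 _)) (LanPsh.mk j l (𝟙 _))
      (hp.μ i j).inv)
    fun u v k l => by
      refine DayProd.mk_eq_mk (p.map u) (p.map v) (LanPsh.mk_eq_mk u rfl (by simp))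
        (LanPsh.mk_eq_mk v rfl (by simp)) ?_
      simp [hp.μ_inv_natural]

theorem lanPsh_mk_dayProd_mk_eq {r s : R} {i i' j j' : D} (u : i ⟶ i') (v : j ⟶ j')
    (k : K.obj (op i')) (l : L.obj (op j')) (a : r ⟶ p.obj i) (b : s ⟶ p.obj j) :
    LanPsh.mk (i ⊗ j) (DayProd.mk i j (K.map u.op k) (L.map v.op l) (𝟙 _))
        ((a ⊗ₘ b) ≫ (hp.μ i j).hom) =
      LanPsh.mk (i' ⊗ j') (DayProd.mk i' j' k l (𝟙 _))
        (((a ≫ p.map u) ⊗ₘ (b ≫ p.map v)) ≫ (hp.μ i' j').hom) :=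
  LanPsh.mk_eq_mk (u ⊗ₘ v) (DayProd.mk_eq_mk u v rfl rfl (by simp)) (by
    rw [← tensorHom_comp_tensorHom, Category.assoc, hp.μ_natural, Category.assoc])

def lanDayOfLan {r s : R} :
    (LanPsh p K).obj (op r) → (LanPsh p L).obj (op s) →
      (LanPsh p (DayProd K L)).obj (op (r ⊗ s)) :=
  Quot.lift₂
    (fun a b => LanPsh.mk (a.d ⊗ b.d) (DayProd.mk a.d b.d a.m b.m (𝟙 _))
      ((a.f ⊗ₘ b.f) ≫ (hp.μ a.d b.d).hom))
    (by
      rintro ⟨i, k, a⟩ ⟨j, l, b⟩ ⟨j', l', b'⟩ ⟨v, hl, hb⟩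
      dsimp only at v hl hb
      rw [hl, hb]
      simpa using lanPsh_mk_dayProd_mk_eq hp K L (𝟙 i) v k l' a b)
    (by
      rintro ⟨i, k, a⟩ ⟨i', k', a'⟩ ⟨j, l, b⟩ ⟨u, hk, ha⟩
      dsimp only at u hk ha
      rw [hk, ha]
      simpa using lanPsh_mk_dayProd_mk_eq hp K L u (𝟙 j) k' l a b)

@[simp]
theorem lanDayOfLan_mk_mk {r s : R} (i j : D) (k : K.obj (op i)) (l : L.obj (op j))
    (a : r ⟶ p.obj i) (b : s ⟶ p.obj j) :
    lanDayOfLan hp K L (LanPsh.mk i k a) (LanPsh.mk j l b) =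
      LanPsh.mk (i ⊗ j) (DayProd.mk i j k l (𝟙 _)) ((a ⊗ₘ b) ≫ (hp.μ i j).hom) :=
  rfl

def dayLanToLanDay : DayProd (LanPsh p K) (LanPsh p L) ⟶ LanPsh p (DayProd K L) :=
  dayDesc (fun _ _ => lanDayOfLan hp K L) fun a b x y => by
    induction x using LanPsh.induction_on
    induction y using LanPsh.induction_on
    simp only [LanPsh.map_mk, lanDayOfLan_mk_mk]
    rw [tensorHom_comp_tensorHom_assoc]

@[simp]
theorem lanDayToDayLan_app_mk {x : R} (d i j : D) (k : K.obj (op i)) (l : L.obj (op j))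
    (f : d ⟶ i ⊗ j) (g : x ⟶ p.obj d) :
    (lanDayToDayLan hp K L).app (op x) (LanPsh.mk d (DayProd.mk i j k l f) g) =
      DayProd.mk (p.obj i) (p.obj j) (LanPsh.mk i k (𝟙 _)) (LanPsh.mk j l (𝟙 _))
        (g ≫ p.map f ≫ (hp.μ i j).inv) :=
  rfl

@[simp]
theorem dayLanToLanDay_app_mk {x r s : R} (i j : D) (k : K.obj (op i)) (l : L.obj (op j))
    (a : r ⟶ p.obj i) (b : s ⟶ p.obj j) (h : x ⟶ r ⊗ s) :
    (dayLanToLanDay hp K L).app (op x) (DayProd.mk r s (LanPsh.mk i k a) (LanPsh.mk j l b) h) =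
      LanPsh.mk (i ⊗ j) (DayProd.mk i j k l (𝟙 _)) (h ≫ (a ⊗ₘ b) ≫ (hp.μ i j).hom) :=
  rfl

theorem lanDayToDayLan_comp_dayLanToLanDay :
    lanDayToDayLan hp K L ≫ dayLanToLanDay hp K L = 𝟙 _ := by
  ext ⟨x⟩ t
  induction t using LanPsh.induction_on with | h d m g =>
  induction m using DayProd.induction_on with | h i j k l f =>
  simp only [TypeCat.Fun.toFun_apply, NatTrans.comp_app, comp_apply, lanDayToDayLan_app_mk,
    dayLanToLanDay_app_mk, NatTrans.id_app, id_apply]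
  rw [LanPsh.mk_eq_mk f (m' := DayProd.mk i j k l (𝟙 _))
    (by rw [DayProd.map_mk, Category.comp_id]) rfl]
  simp

theorem dayLanToLanDay_comp_lanDayToDayLan :
    dayLanToLanDay hp K L ≫ lanDayToDayLan hp K L = 𝟙 _ := by
  ext ⟨x⟩ t
  induction t using DayProd.induction_on with | h r s ka lb h =>
  induction ka using LanPsh.induction_on with | h i k a =>
  induction lb using LanPsh.induction_on with | h j l b =>
  simp only [TypeCat.Fun.toFun_apply, NatTrans.comp_app, comp_apply, lanDayToDayLan_app_mk,
    dayLanToLanDay_app_mk, NatTrans.id_app, id_apply]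
  rw [DayProd.mk_eq_mk a b (k' := LanPsh.mk i k (𝟙 _)) (l' := LanPsh.mk j l (𝟙 _))
    (by rw [LanPsh.map_mk, Category.comp_id]) (by rw [LanPsh.map_mk, Category.comp_id]) rfl]
  simp

-- Stated on `(lanFunctor p).obj` rather than `LanPsh p` so that it rewrites against the
-- naturality squares of `lanFunctor p`.
def lanDayIsoDayLan :
    (lanFunctor p).obj (DayProd K L) ≅ DayProd ((lanFunctor p).obj K) ((lanFunctor p).obj L) where
  hom := lanDayToDayLan hp K L
  inv := dayLanToLanDay hp K L
  hom_inv_id := lanDayToDayLan_comp_dayLanToLanDay hp K L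
  inv_hom_id := dayLanToLanDay_comp_lanDayToDayLan hp K L

theorem lanDayIsoDayLan_hom_natural {K K' L L' : Dᵒᵖ ⥤ Type u} (φ : K ⟶ K') (ψ : L ⟶ L') :
    (lanFunctor p).map (dayMap φ ψ) ≫ (lanDayIsoDayLan hp K' L').hom =
      (lanDayIsoDayLan hp K L).hom ≫ dayMap ((lanFunctor p).map φ) ((lanFunctor p).map ψ) := by
  ext ⟨x⟩ t
  induction t using LanPsh.induction_on with | h d m g =>
  induction m using DayProd.induction_on
  rfl

end Monoidal

section Comparison

variable {D R : Type u} [Category.{u} D] [Category.{u} R] (p : D ⥤ R)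

noncomputable def lanIsoLanFunctor : p.op.lan ≅ lanFunctor p :=
  (p.op.lanAdjunction (Type u)).leftAdjointUniq (lanPshAdjunction p)

noncomputable def lanYonedaIso (d : D) : p.op.lan.obj (yoneda.obj d) ≅ yoneda.obj (p.obj d) :=
  p.op.lan.mapIso (uliftYonedaIsoYoneda.{u}.app d).symm ≪≫
    ((Presheaf.compULiftYonedaIsoULiftYonedaCompLan.{0} p).app d).symm ≪≫
    uliftYonedaIsoYoneda.{u}.app (p.obj d)

variable [MonoidalCategory D] [MonoidalCategory R] {p} (hp : StrongMonoidalData D R p)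

noncomputable def lanDayIso (K L : Dᵒᵖ ⥤ Type u) :
    p.op.lan.obj (DayProd K L) ≅ DayProd (p.op.lan.obj K) (p.op.lan.obj L) :=
  (lanIsoLanFunctor p).app _ ≪≫ lanDayIsoDayLan hp K L ≪≫
    dayIso ((lanIsoLanFunctor p).app K).symm ((lanIsoLanFunctor p).app L).symm

theorem lanDayIso_hom_natural {K K' L L' : Dᵒᵖ ⥤ Type u} (φ : K ⟶ K') (ψ : L ⟶ L') :
    p.op.lan.map (dayMap φ ψ) ≫ (lanDayIso hp K' L').hom =
      (lanDayIso hp K L).hom ≫ dayMap (p.op.lan.map φ) (p.op.lan.map ψ) := by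
  simp only [lanDayIso, Iso.trans_hom, Iso.app_hom, Iso.symm_hom, Iso.app_inv, dayIso_hom,
    Category.assoc]
  rw [NatTrans.naturality_assoc, reassoc_of% (lanDayIsoDayLan_hom_natural hp φ ψ), ← dayMap_comp,
    ← dayMap_comp, NatTrans.naturality, NatTrans.naturality, dayMap_comp]

end Comparison

theorem statement_6_general
    {R₀ R : Type u} [Category.{u} R₀] [Category.{u} R] [MonoidalCategory R] (c : R₀ ⥤ R)
    [MonoidalCategory (DCat c)] (hp : StrongMonoidalData (DCat c) R (projD c)) :
    ∃ (s : ∀ K L : (DCat c)ᵒᵖ ⥤ Type u,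
        (projD c).op.lan.obj (DayProd K L) ≅
          DayProd ((projD c).op.lan.obj K) ((projD c).op.lan.obj L))
      (_ : (projD c).op.lan.obj (yoneda.obj (𝟙_ (DCat c))) ≅ yoneda.obj (𝟙_ R)),
      ∀ {K K' L L' : (DCat c)ᵒᵖ ⥤ Type u} (φ : K ⟶ K') (ψ : L ⟶ L'),
        (projD c).op.lan.map (dayMap φ ψ) ≫ (s K' L').hom =
          (s K L).hom ≫ dayMap ((projD c).op.lan.map φ) ((projD c).op.lan.map ψ) :=
  ⟨lanDayIso hp, lanYonedaIso (projD c) _ ≪≫ yoneda.mapIso hp.ε, lanDayIso_hom_natural hp⟩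

/-- Suppose `R₀` and `R` are monoidal, `c : R₀ ⥤ R` is
strong monoidal, and `D_R` carries the induced monoidal product making the
projection `p : D_R ⥤ R` monoidal. Then the left Kan extension
`p_! : Set^{D_R^{op}} ⥤ Set^{R^{op}}` is canonically strong monoidal for the
Day convolution products: there are isomorphisms
`p_!(K ⊗ L) ≅ p_!K ⊗ p_!L`, natural in `K` and `L`, and
`p_!(unit) ≅ unit`. -/
theorem statement_6
    {R₀ R : Type u} [Category.{u} R₀] [Category.{u} R]
    [MonoidalCategory R₀] [MonoidalCategory R]
    (deg₀ : R₀ → ℕ) (hdir₀ : IsDirect deg₀)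
    (degR : R → ℕ) (hgen : IsGenDirect degR)
    (c : R₀ ⥤ R) (hc : StrongMonoidalData R₀ R c)
    (hlift : ∀ {a b : R} (f : a ⟶ b),
      ∃ (x y : R₀) (k : x ⟶ y) (w : a ≅ c.obj x) (w' : b ≅ c.obj y),
        w.hom ≫ c.map k = f ≫ w'.hom)
    [MonoidalCategory (DCat c)] (hp : StrongMonoidalData (DCat c) R (projD c)) :
    ∃ (s : ∀ K L : (DCat c)ᵒᵖ ⥤ Type u,
        (projD c).op.lan.obj (DayProd K L) ≅
          DayProd ((projD c).op.lan.obj K) ((projD c).op.lan.obj L))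
      (_ : (projD c).op.lan.obj (yoneda.obj (𝟙_ (DCat c))) ≅ yoneda.obj (𝟙_ R)),
      ∀ {K K' L L' : (DCat c)ᵒᵖ ⥤ Type u} (φ : K ⟶ K') (ψ : L ⟶ L'),
        (projD c).op.lan.map (dayMap φ ψ) ≫ (s K' L').hom =
          (s K L).hom ≫ dayMap ((projD c).op.lan.map φ) ((projD c).op.lan.map ψ) :=
  statement_6_general c hp

end PaperFormal
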